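/- For fixed ê > 0 and any real a, the function S(e) := ∫_{ê}^{∞} (exp(-(x - a·e)²/2) + exp(-(x + a·e)²/2)) dx, defined for e ≥ 0, is non-decreasing in e. -/

import Mathlib

/-!
Splitting the integrand and shifting, `S = T (ê - a e) + T (ê + a e)` with `T s = ∫_s^∞ φ`,
which depends on `a e` only through `b = |a| e`. Raising `b` to `b'` gains `∫_{ê-b'}^{ê-b} φ`
and loses `∫_{ê+b}^{ê+b'} φ`; substituting, these are `∫_b^{b'} φ (ê ∓ y) dy`, and
`φ (ê - y) ≥ φ (ê + y)` because `|ê - y| ≤ ê + y`.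
-/

open MeasureTheory Set

theorem setIntegral_Ici_comp_add_right (f : ℝ → ℝ) (t c : ℝ) :
    ∫ x in Ici t, f (x + c) = ∫ x in Ici (t + c), f x := by
  simpa using (measurePreserving_add_right volume c).setIntegral_preimage_emb
    (measurableEmbedding_addRight c) f (Ici (t + c))

section RadiallyDecreasing

variable {f : ℝ → ℝ}

theorem integral_Ici_comp_sub_add_comp_add (hf : Integrable f) (t c : ℝ) :
    ∫ x in Ici t, (f (x - c) + f (x + c)) =
      (∫ x in Ici (t - c), f x) + ∫ x in Ici (t + c), f x := by
  have hsub : ∫ x in Ici t, f (x - c) = ∫ x in Ici (t - c), f x := by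
    simpa [sub_eq_add_neg] using setIntegral_Ici_comp_add_right f t (-c)
  rw [integral_add (hf.comp_sub_right c).integrableOn (hf.comp_add_right c).integrableOn, hsub,
    setIntegral_Ici_comp_add_right]

theorem integral_Ici_sub_add_integral_Ici_add_le (hf : Integrable f)
    (hdec : ∀ x y, |x| ≤ |y| → f y ≤ f x) {t b b' : ℝ} (ht : 0 ≤ t) (hb : 0 ≤ b)
    (hbb' : b ≤ b') :
    (∫ x in Ici (t - b), f x) + ∫ x in Ici (t + b), f x ≤
      (∫ x in Ici (t - b'), f x) + ∫ x in Ici (t + b'), f x := by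
  have hgain : (∫ x in Ici (t - b'), f x) - ∫ x in Ici (t - b), f x =
      ∫ y in b..b', f (t - y) := by
    rw [intervalIntegral.integral_Ici_sub_Ici' hf.integrableOn hf.integrableOn,
      intervalIntegral.integral_comp_sub_left]
  have hloss : (∫ x in Ici (t + b), f x) - ∫ x in Ici (t + b'), f x =
      ∫ y in b..b', f (t + y) := by
    rw [intervalIntegral.integral_Ici_sub_Ici' hf.integrableOn hf.integrableOn,
      intervalIntegral.integral_comp_add_left]
  have hcompare : ∫ y in b..b', f (t + y) ≤ ∫ y in b..b', f (t - y) := by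
    refine intervalIntegral.integral_mono_on hbb' (hf.comp_add_left t).intervalIntegrable
      (hf.comp_sub_left t).intervalIntegrable fun y hy => hdec _ _ ?_
    rw [abs_of_nonneg (by linarith [hy.1] : 0 ≤ t + y)]
    exact abs_le.2 ⟨by linarith [hy.1], by linarith [hy.1]⟩
  linarith

theorem integral_Ici_comp_sub_add_comp_add_abs (f : ℝ → ℝ) (t c : ℝ) :
    ∫ x in Ici t, (f (x - c) + f (x + c)) = ∫ x in Ici t, (f (x - |c|) + f (x + |c|)) := by
  rcases abs_choice c with h | h
  · rw [h]
  · simp_rw [h, sub_neg_eq_add, ← sub_eq_add_neg, add_comm]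

theorem integral_Ici_comp_sub_add_comp_add_le (hf : Integrable f)
    (hdec : ∀ x y, |x| ≤ |y| → f y ≤ f x) {t c c' : ℝ} (ht : 0 ≤ t) (hcc' : |c| ≤ |c'|) :
    ∫ x in Ici t, (f (x - c) + f (x + c)) ≤ ∫ x in Ici t, (f (x - c') + f (x + c')) := by
  rw [integral_Ici_comp_sub_add_comp_add_abs f t c,
    integral_Ici_comp_sub_add_comp_add_abs f t c',
    integral_Ici_comp_sub_add_comp_add hf, integral_Ici_comp_sub_add_comp_add hf]
  exact integral_Ici_sub_add_integral_Ici_add_le hf hdec ht (abs_nonneg c) hcc'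

end RadiallyDecreasing

theorem integrable_exp_neg_sq_div_two : Integrable fun x : ℝ => Real.exp (-x ^ 2 / 2) := by
  simpa [neg_div, div_eq_inv_mul] using integrable_exp_neg_mul_sq (b := 1 / 2) (by norm_num)

theorem exp_neg_sq_div_two_le_of_abs_le {x y : ℝ} (h : |x| ≤ |y|) :
    Real.exp (-y ^ 2 / 2) ≤ Real.exp (-x ^ 2 / 2) := by
  have := sq_le_sq.2 h
  gcongr

theorem stmt_2 (ehat a : ℝ) (hehat : 0 < ehat) :
    ∀ e e' : ℝ, 0 ≤ e → e ≤ e' →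
      (∫ x in Set.Ici ehat,
          (Real.exp (-(x - a * e) ^ 2 / 2) + Real.exp (-(x + a * e) ^ 2 / 2))) ≤
        ∫ x in Set.Ici ehat,
          (Real.exp (-(x - a * e') ^ 2 / 2) + Real.exp (-(x + a * e') ^ 2 / 2)) := by
  intro e e' he hee
  refine integral_Ici_comp_sub_add_comp_add_le (f := fun x => Real.exp (-x ^ 2 / 2))
    integrable_exp_neg_sq_div_two (fun _ _ => exp_neg_sq_div_two_le_of_abs_le) hehat.le ?_
  rw [abs_mul, abs_mul, abs_of_nonneg he, abs_of_nonneg (he.trans hee)]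
  exact mul_le_mul_of_nonneg_left hee (abs_nonneg a)
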